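/- arXiv:1303.6089 — 2 statements merged into one kernel-verified Lean document; each statement's English description precedes it below -/
import Mathlib

section
/- For 0 < a < b, ∫_0^1 t·|1−2t|/(tb+(1−t)a)² dt = −1/(b(b−a)) + ((3a+b)/(b−a)³) ln((a+b)²/(4ab)). -/
open Real Set intervalIntegral

def HarmonicallyConvexOn (I : Set ℝ) (f : ℝ → ℝ) : Prop :=
  ∀ x ∈ I, ∀ y ∈ I, ∀ t ∈ Set.Icc (0:ℝ) 1,
    f (x * y / (t * x + (1 - t) * y)) ≤ t * f y + (1 - t) * f x

/-! With `u = t * b + (1 - t) * a`, partial fractions in `u` give a primitive `F` of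
`t (1 - 2t) / u²` built from `u`, `log u` and `1 / u`. The integrand is `|F'|` and `F'` changes
sign exactly once, at `t = 1/2`, so the integral is `2 F(1/2) - F(0) - F(1)`, evaluated at
`u = (a + b) / 2`, `a` and `b`. -/

theorem integral_abs_deriv_of_sign_change {f f' : ℝ → ℝ} {a m c : ℝ}
    (ham : a ≤ m) (hmc : m ≤ c) (hf : ∀ x ∈ Icc a c, HasDerivAt f (f' x) x)
    (hint : IntervalIntegrable f' MeasureTheory.volume a c)
    (hpos : ∀ x ∈ Icc a m, 0 ≤ f' x) (hneg : ∀ x ∈ Icc m c, f' x ≤ 0) :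
    ∫ x in a..c, |f' x| = 2 * f m - f a - f c := by
  have hsub₁ : uIcc a m ⊆ uIcc a c := uIcc_subset_uIcc_left (mem_uIcc_of_le ham hmc)
  have hsub₂ : uIcc m c ⊆ uIcc a c := uIcc_subset_uIcc_right (mem_uIcc_of_le ham hmc)
  have hac : uIcc a c = Icc a c := uIcc_of_le (ham.trans hmc)
  have left : ∫ x in a..m, |f' x| = f m - f a := by
    rw [integral_congr fun x hx => abs_of_nonneg (hpos x (by rwa [uIcc_of_le ham] at hx))]
    exact integral_eq_sub_of_hasDerivAt (fun x hx => hf x (hac ▸ hsub₁ hx))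
      (hint.mono_set hsub₁)
  have right : ∫ x in m..c, |f' x| = f m - f c := by
    rw [integral_congr fun x hx => abs_of_nonpos (hneg x (by rwa [uIcc_of_le hmc] at hx)),
      integral_neg,
      integral_eq_sub_of_hasDerivAt (fun x hx => hf x (hac ▸ hsub₂ hx)) (hint.mono_set hsub₂)]
    ring
  rw [← integral_add_adjacent_intervals (hint.abs.mono_set hsub₁) (hint.abs.mono_set hsub₂),
    left, right]
  ring

theorem convex_combination_pos {a b t : ℝ} (ha : 0 < a) (hb : 0 < b)
    (ht : t ∈ Icc (0 : ℝ) 1) : 0 < t * b + (1 - t) * a := by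
  rcases ht.1.eq_or_lt with rfl | ht₀
  · simpa using ha
  · nlinarith [mul_pos ht₀ hb, mul_nonneg (sub_nonneg.2 ht.2) ha.le]

noncomputable def integrandPrimitive (a b t : ℝ) : ℝ :=
  (-2 * (t * b + (1 - t) * a) + (3 * a + b) * log (t * b + (1 - t) * a)
    + a * (a + b) * (t * b + (1 - t) * a)⁻¹) / (b - a) ^ 3

theorem hasDerivAt_integrandPrimitive {a b t : ℝ} (hab : a ≠ b)
    (ht : t * b + (1 - t) * a ≠ 0) :
    HasDerivAt (integrandPrimitive a b) (t * (1 - 2 * t) / (t * b + (1 - t) * a) ^ 2) t := by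
  have hline : HasDerivAt (fun s : ℝ => s * b + (1 - s) * a) (b - a) t := by
    refine (((hasDerivAt_id t).mul_const b).add
      (((hasDerivAt_const t (1 : ℝ)).sub (hasDerivAt_id t)).mul_const a)).congr_deriv ?_
    ring
  have hsum := (((hline.const_mul (-2)).add ((hline.log ht).const_mul (3 * a + b))).add
    ((hline.inv ht).const_mul (a * (a + b)))).div_const ((b - a) ^ 3)
  refine hsum.congr_deriv (Eq.symm ?_)
  have hba : b - a ≠ 0 := sub_ne_zero.mpr hab.symm
  field_simp
  ring

theorem log_sq_add_div_four_mul {a b : ℝ} (ha : 0 < a) (hb : 0 < b) :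
    log ((a + b) ^ 2 / (4 * a * b)) = 2 * log ((a + b) / 2) - log a - log b := by
  rw [show (a + b) ^ 2 / (4 * a * b) = ((a + b) / 2) ^ 2 / (a * b) by ring,
    log_div (by positivity) (by positivity), log_pow, log_mul ha.ne' hb.ne']
  push_cast
  ring

theorem two_mul_integrandPrimitive_half_sub {a b : ℝ} (ha : 0 < a) (hab : a < b) :
    2 * integrandPrimitive a b (1 / 2) - integrandPrimitive a b 0 - integrandPrimitive a b 1 =
      -1 / (b * (b - a)) + (3 * a + b) / (b - a) ^ 3 * log ((a + b) ^ 2 / (4 * a * b)) := by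
  have hb : 0 < b := ha.trans hab
  have hba : b - a ≠ 0 := sub_ne_zero.mpr hab.ne'
  have h₀ : (0 : ℝ) * b + (1 - 0) * a = a := by ring
  have h₁ : (1 : ℝ) * b + (1 - 1) * a = b := by ring
  have hmid : (1 / 2 : ℝ) * b + (1 - 1 / 2) * a = (a + b) / 2 := by ring
  simp only [integrandPrimitive, h₀, h₁, hmid, log_sq_add_div_four_mul ha hb]
  field_simp
  ring

theorem stmt10 (a b : ℝ) (ha : 0 < a) (hab : a < b) :
    ∫ t in (0:ℝ)..1, t * |1 - 2 * t| / (t * b + (1 - t) * a) ^ 2 =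
      -1 / (b * (b - a)) + (3 * a + b) / (b - a) ^ 3 * Real.log ((a + b) ^ 2 / (4 * a * b)) := by
  have hpos : ∀ t ∈ Icc (0 : ℝ) 1, 0 < t * b + (1 - t) * a :=
    fun t ht => convex_combination_pos ha (ha.trans hab) ht
  have habs : EqOn (fun t => t * |1 - 2 * t| / (t * b + (1 - t) * a) ^ 2)
      (fun t => |t * (1 - 2 * t) / (t * b + (1 - t) * a) ^ 2|) (uIcc 0 1) := by
    intro t ht
    rw [uIcc_of_le zero_le_one] at ht
    simp only [abs_div, abs_mul, abs_of_nonneg ht.1,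
      abs_of_nonneg (sq_nonneg (t * b + (1 - t) * a))]
  have hcont : ContinuousOn (fun t => t * (1 - 2 * t) / (t * b + (1 - t) * a) ^ 2) (Icc 0 1) :=
    ContinuousOn.div (by fun_prop) (by fun_prop) fun t ht => pow_ne_zero 2 (hpos t ht).ne'
  rw [integral_congr habs, integral_abs_deriv_of_sign_change
      (f := integrandPrimitive a b) (m := 1 / 2) (by norm_num) (by norm_num)
      (fun t ht => hasDerivAt_integrandPrimitive hab.ne (hpos t ht).ne')
      (hcont.intervalIntegrable_of_Icc zero_le_one)
      (fun t ht => div_nonneg (mul_nonneg ht.1 (by linarith [ht.2])) (sq_nonneg _))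
      (fun t ht => div_nonpos_of_nonpos_of_nonneg
        (mul_nonpos_of_nonneg_of_nonpos (by linarith [ht.1]) (by linarith [ht.1])) (sq_nonneg _))]
  exact two_mul_integrandPrimitive_half_sub ha hab
end

section
/- For 0 < a < b and p ∈ (−1, ∞) \ {0}, H(a,b)^{p+2} ≤ G(a,b)² · L_p(a,b)^p ≤ A(a^{p+2}, b^{p+2}), where H(a,b) = 2ab/(a+b), G(a,b) = √(ab), L_p(a,b) = ((b^{p+1} − a^{p+1})/((p+1)(b−a)))^{1/p}, A(x,y) = (x+y)/2. -/
open Real Set intervalIntegral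

/-! The substitution `x = t⁻¹` turns a harmonically convex `f` on `[a, b]` into the convex
function `t ↦ f t⁻¹` on `[b⁻¹, a⁻¹]`, and `∫ t in b⁻¹..a⁻¹, f t⁻¹` into `∫ x in a..b, f x / x ^ 2`.
The classical Hermite–Hadamard inequality for convex functions (pair each point `x` with its
reflection `u + v - x` and integrate) thus becomes the harmonic one. For `f x = x ^ (p + 2)`,
harmonically convex since `t ↦ t ^ (-(p + 2))` is convex, the middle term is
`a * b / (b - a) * ∫ x in a..b, x ^ p = G(a, b) ^ 2 * L_p(a, b) ^ p`. -/

open MeasureTheory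

section HermiteHadamard

variable {f : ℝ → ℝ} {u v : ℝ}

theorem intervalIntegral.integral_add_comp_reflect
    (hf : IntervalIntegrable f volume u v) :
    ∫ x in u..v, (f x + f (u + v - x)) = 2 * ∫ x in u..v, f x := by
  have hrefl : ∫ x in u..v, f (u + v - x) = ∫ x in u..v, f x := by
    rw [integral_comp_sub_left]; ring_nf
  have hint : IntervalIntegrable (fun x => f (u + v - x)) volume u v := by
    simpa using hf.symm.comp_sub_left (u + v)
  rw [integral_add hf hint, hrefl, two_mul]

theorem ConvexOn.two_mul_map_midpoint_le_add_map_reflect (hf : ConvexOn ℝ (Icc u v) f) {x : ℝ}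
    (hx : x ∈ Icc u v) : 2 * f ((u + v) / 2) ≤ f x + f (u + v - x) := by
  have hx' : u + v - x ∈ Icc u v := ⟨by linarith [hx.2], by linarith [hx.1]⟩
  have h := hf.2 hx hx' (by norm_num : (0 : ℝ) ≤ 1 / 2) (by norm_num : (0 : ℝ) ≤ 1 / 2)
    (by norm_num)
  simp only [smul_eq_mul] at h
  rw [show 1 / 2 * x + 1 / 2 * (u + v - x) = (u + v) / 2 by ring] at h
  linarith

theorem ConvexOn.add_map_reflect_le_add (hf : ConvexOn ℝ (Icc u v) f) {x : ℝ}
    (hx : x ∈ Icc u v) : f x + f (u + v - x) ≤ f u + f v := by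
  rcases hx.1.eq_or_lt with rfl | hux
  · simp
  have huv : 0 < v - u := by linarith [hx.2]
  have hu : u ∈ Icc u v := left_mem_Icc.2 (by linarith)
  have hv : v ∈ Icc u v := right_mem_Icc.2 (by linarith)
  -- `x` and its reflection are the convex combinations of `u, v` with swapped weights `t, 1 - t`
  set t := (v - x) / (v - u)
  have ht : t * (v - u) = v - x := div_mul_cancel₀ _ huv.ne'
  have ht₀ : 0 ≤ t := div_nonneg (by linarith [hx.2]) huv.le
  have ht₁ : 0 ≤ 1 - t := by nlinarith
  have h₁ := hf.2 hu hv ht₀ ht₁ (by ring)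
  have h₂ := hf.2 hu hv ht₁ ht₀ (by ring)
  simp only [smul_eq_mul] at h₁ h₂
  rw [show t * u + (1 - t) * v = x by linear_combination -ht] at h₁
  rw [show (1 - t) * u + t * v = u + v - x by linear_combination ht] at h₂
  linarith

theorem ConvexOn.midpoint_rule_le_integral (hf : ConvexOn ℝ (Icc u v) f) (huv : u ≤ v)
    (hint : IntervalIntegrable f volume u v) :
    f ((u + v) / 2) * (v - u) ≤ ∫ x in u..v, f x := by
  have h := integral_mono_on huv intervalIntegrable_const
    (hint.add (by simpa using hint.symm.comp_sub_left (u + v)))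
    fun x hx => hf.two_mul_map_midpoint_le_add_map_reflect hx
  rw [integral_add_comp_reflect hint, intervalIntegral.integral_const, smul_eq_mul] at h
  linarith

theorem ConvexOn.integral_le_trapezoid (hf : ConvexOn ℝ (Icc u v) f) (huv : u ≤ v)
    (hint : IntervalIntegrable f volume u v) :
    ∫ x in u..v, f x ≤ (f u + f v) / 2 * (v - u) := by
  have h := integral_mono_on huv
    (hint.add (by simpa using hint.symm.comp_sub_left (u + v))) intervalIntegrable_const
    fun x hx => hf.add_map_reflect_le_add hx
  rw [integral_add_comp_reflect hint, intervalIntegral.integral_const, smul_eq_mul] at h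
  linarith

end HermiteHadamard

theorem convexOn_rpow_of_nonpos {q : ℝ} (hq : q ≤ 0) :
    ConvexOn ℝ (Ioi 0) fun x : ℝ => x ^ q := by
  refine convexOn_of_hasDerivWithinAt2_nonneg (f' := fun x => q * x ^ (q - 1))
    (f'' := fun x => q * ((q - 1) * x ^ (q - 1 - 1))) (convex_Ioi 0)
    (fun x hx => (continuousAt_rpow_const x q (Or.inl (ne_of_gt hx))).continuousWithinAt)
    (fun x hx => ?_) (fun x hx => ?_) (fun x hx => ?_) <;> rw [interior_Ioi] at hx
  · exact (hasDerivAt_rpow_const (Or.inl (ne_of_gt hx))).hasDerivWithinAt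
  · exact ((hasDerivAt_rpow_const (Or.inl (ne_of_gt hx))).const_mul q).hasDerivWithinAt
  · rw [← mul_assoc]
    exact mul_nonneg (by nlinarith) (rpow_pos_of_pos hx _).le

theorem mul_div_add_mul_eq_inv_add_mul_inv {x y : ℝ} (hx : x ≠ 0) (hy : y ≠ 0) (t : ℝ) :
    x * y / (t * x + (1 - t) * y) = (t * y⁻¹ + (1 - t) * x⁻¹)⁻¹ := by
  rw [← inv_div]
  congr 1
  field_simp

theorem harmonicallyConvexOn_rpow {s : Set ℝ} (hs : s ⊆ Ioi 0) {r : ℝ} (hr : 0 ≤ r) :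
    HarmonicallyConvexOn s fun x => x ^ r := by
  intro x hx y hy t ht
  have hx₀ : 0 < x := hs hx
  have hy₀ : 0 < y := hs hy
  have h := (convexOn_rpow_of_nonpos (neg_nonpos.2 hr)).2 (inv_pos.2 hy₀) (inv_pos.2 hx₀)
    ht.1 (sub_nonneg.2 ht.2) (add_sub_cancel t 1)
  have hinv : ∀ z : ℝ, 0 < z → z⁻¹ ^ (-r) = z ^ r := fun z hz => by
    rw [rpow_neg (inv_nonneg.2 hz.le), inv_rpow hz.le, inv_inv]
  have hcomb : 0 < t * y⁻¹ + (1 - t) * x⁻¹ :=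
    convex_Ioi 0 (inv_pos.2 hy₀) (inv_pos.2 hx₀) ht.1 (sub_nonneg.2 ht.2) (add_sub_cancel t 1)
  change (x * y / (t * x + (1 - t) * y)) ^ r ≤ t * y ^ r + (1 - t) * x ^ r
  rwa [mul_div_add_mul_eq_inv_add_mul_inv hx₀.ne' hy₀.ne', ← hinv _ (inv_pos.2 hcomb), inv_inv,
    ← hinv y hy₀, ← hinv x hx₀]

theorem inv_mem_Icc_of_mem_Icc_inv {a b u : ℝ} (ha : 0 < a) (hb : 0 < b) (hu : u ∈ Icc b⁻¹ a⁻¹) :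
    u⁻¹ ∈ Icc a b :=
  have hu₀ : 0 < u := (inv_pos.2 hb).trans_le hu.1
  ⟨(le_inv_comm₀ ha hu₀).2 hu.2, (inv_le_comm₀ hu₀ hb).2 hu.1⟩

theorem HarmonicallyConvexOn.convexOn_comp_inv {f : ℝ → ℝ} {a b : ℝ} (ha : 0 < a) (hb : 0 < b)
    (hf : HarmonicallyConvexOn (Icc a b) f) : ConvexOn ℝ (Icc b⁻¹ a⁻¹) fun t => f t⁻¹ := by
  refine ⟨convex_Icc _ _, fun u hu v hv α β hα hβ hαβ => ?_⟩
  obtain rfl : β = 1 - α := by linarith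
  have h := hf _ (inv_mem_Icc_of_mem_Icc_inv ha hb hv) _ (inv_mem_Icc_of_mem_Icc_inv ha hb hu) α
    ⟨hα, by linarith⟩
  rwa [mul_div_add_mul_eq_inv_add_mul_inv (inv_ne_zero ((inv_pos.2 hb).trans_le hv.1).ne')
    (inv_ne_zero ((inv_pos.2 hb).trans_le hu.1).ne'), inv_inv, inv_inv] at h

theorem intervalIntegral.integral_div_sq_eq_integral_comp_inv {f : ℝ → ℝ} {a b : ℝ} (ha : 0 < a)
    (hab : a ≤ b) (hf : ContinuousOn f (Icc a b)) :
    ∫ x in a..b, f x / x ^ 2 = ∫ t in b⁻¹..a⁻¹, f t⁻¹ := by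
  rw [← uIcc_of_le hab] at hf
  have h0 : ∀ x ∈ uIcc a b, x ≠ 0 := fun x hx => by
    rw [uIcc_of_le hab] at hx; exact (ha.trans_le hx.1).ne'
  have hg : ContinuousOn (fun t => f t⁻¹) ((·⁻¹) '' uIcc a b) :=
    hf.comp (continuousOn_inv₀.mono (by rintro _ ⟨x, hx, rfl⟩; exact inv_ne_zero (h0 x hx)))
      (by rintro _ ⟨x, hx, rfl⟩; rwa [inv_inv])
  have h := integral_comp_mul_deriv' (fun x hx => hasDerivAt_inv (h0 x hx))
    (continuousOn_of_forall_continuousAt fun x hx => by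
      fun_prop (disch := exact pow_ne_zero 2 (h0 x hx))) hg
  simp only [Function.comp_apply, inv_inv, mul_neg, integral_neg] at h
  simp only [integral_symm a⁻¹, ← h, neg_neg, div_eq_mul_inv]

theorem HarmonicallyConvexOn.hermite_hadamard {f : ℝ → ℝ} {a b : ℝ} (ha : 0 < a) (hab : a < b)
    (hf : HarmonicallyConvexOn (Icc a b) f) (hcont : ContinuousOn f (Icc a b)) :
    f (2 * a * b / (a + b)) ≤ a * b / (b - a) * ∫ x in a..b, f x / x ^ 2 ∧
      a * b / (b - a) * ∫ x in a..b, f x / x ^ 2 ≤ (f a + f b) / 2 := by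
  have hb : 0 < b := ha.trans hab
  have hinv : b⁻¹ ≤ a⁻¹ := inv_anti₀ ha hab.le
  have hg := hf.convexOn_comp_inv ha hb
  have hgint : IntervalIntegrable (fun t => f t⁻¹) volume b⁻¹ a⁻¹ := by
    refine (hcont.comp (continuousOn_inv₀.mono fun t ht => ?_)
      fun t ht => inv_mem_Icc_of_mem_Icc_inv ha hb ht).intervalIntegrable_of_Icc hinv
    exact ((inv_pos.2 hb).trans_le ht.1).ne'
  have hlen : a⁻¹ - b⁻¹ = (a * b / (b - a))⁻¹ := by
    field_simp
  have hmid : ((b⁻¹ + a⁻¹) / 2)⁻¹ = 2 * a * b / (a + b) := by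
    field_simp
  have hscale : 0 < a * b / (b - a) := by
    have := sub_pos.2 hab; positivity
  rw [integral_div_sq_eq_integral_comp_inv ha hab.le hcont]
  have hl := hg.midpoint_rule_le_integral hinv hgint
  have hr := hg.integral_le_trapezoid hinv hgint
  rw [hmid, hlen, ← div_eq_mul_inv, div_le_iff₀ hscale] at hl
  rw [hlen, ← div_eq_mul_inv, le_div_iff₀ hscale, inv_inv, inv_inv] at hr
  exact ⟨by linarith, by linarith⟩

theorem stmt16 (a b p : ℝ) (ha : 0 < a) (hab : a < b) (hp : -1 < p) (hp0 : p ≠ 0) :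
    (2 * a * b / (a + b)) ^ (p + 2) ≤
      (Real.sqrt (a * b)) ^ 2 *
        (((b ^ (p + 1) - a ^ (p + 1)) / ((p + 1) * (b - a))) ^ (1 / p)) ^ p ∧
    (Real.sqrt (a * b)) ^ 2 *
        (((b ^ (p + 1) - a ^ (p + 1)) / ((p + 1) * (b - a))) ^ (1 / p)) ^ p ≤
      (a ^ (p + 2) + b ^ (p + 2)) / 2 := by
  have hp1 : 0 < p + 1 := by linarith
  have hintegral : ∫ x in a..b, x ^ (p + 2) / x ^ 2 = (b ^ (p + 1) - a ^ (p + 1)) / (p + 1) := by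
    rw [integral_congr fun x hx => ?_, integral_rpow (Or.inl hp)]
    rw [uIcc_of_le hab.le] at hx
    rw [← rpow_natCast, ← rpow_sub (ha.trans_le hx.1)]
    norm_num
  have hLp : 0 ≤ (b ^ (p + 1) - a ^ (p + 1)) / ((p + 1) * (b - a)) := by
    have := rpow_lt_rpow ha.le hab hp1
    have := sub_pos.2 hab
    apply div_nonneg <;> nlinarith
  have hmean : (Real.sqrt (a * b)) ^ 2 *
        (((b ^ (p + 1) - a ^ (p + 1)) / ((p + 1) * (b - a))) ^ (1 / p)) ^ p
      = a * b / (b - a) * ∫ x in a..b, x ^ (p + 2) / x ^ 2 := by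
    rw [sq_sqrt (mul_pos ha (ha.trans hab)).le, ← rpow_mul hLp, one_div_mul_cancel hp0, rpow_one,
      hintegral]
    field_simp
  rw [hmean]
  exact (harmonicallyConvexOn_rpow (fun x hx => ha.trans_le hx.1) (by linarith)).hermite_hadamard
    ha hab ((continuous_rpow_const (by linarith)).continuousOn)
end
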